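/- arXiv:1901.10519 — 2 statements merged into one kernel-verified Lean document; each statement's English description precedes it below -/
import Mathlib

section
/- The Laplace transform of t ↦ log t equals -(C + log s)/s for every real s > 0, where C is the Euler–Mascheroni constant; that is, ∫₀^∞ e^{-st} log t dt = -(γ + log s)/s. -/
open MeasureTheory

lemma complex_gamma_integral_deriv_one :
    (∫ t in Set.Ioi (0:ℝ), ((t:ℂ) ^ ((1:ℂ) - 1) * (Real.log t * Real.exp (-t))))
      = (-(Real.eulerMascheroniConstant : ℝ) : ℂ) := by
  have h1 : HasDerivAt Complex.GammaIntegral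
      (∫ t in Set.Ioi (0:ℝ), ((t:ℂ) ^ ((1:ℂ) - 1) * (Real.log t * Real.exp (-t)))) 1 :=
    Complex.hasDerivAt_GammaIntegral (by norm_num)
  have heq : Complex.Gamma =ᶠ[nhds (1:ℂ)] Complex.GammaIntegral := by
    have hopen : IsOpen {z : ℂ | 0 < z.re} := isOpen_lt continuous_const Complex.continuous_re
    filter_upwards [hopen.mem_nhds (by norm_num : (0:ℝ) < (1:ℂ).re)] with z hz
    exact Complex.Gamma_eq_integral hz
  have h2 : HasDerivAt Complex.Gamma
      (∫ t in Set.Ioi (0:ℝ), ((t:ℂ) ^ ((1:ℂ) - 1) * (Real.log t * Real.exp (-t)))) 1 :=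
    h1.congr_of_eventuallyEq heq
  have := Complex.hasDerivAt_Gamma_one.unique h2
  rw [← this]

lemma integral_exp_neg_mul_log :
    (∫ t in Set.Ioi (0:ℝ), Real.exp (-t) * Real.log t)
      = -Real.eulerMascheroniConstant := by
  have h := complex_gamma_integral_deriv_one
  have h2 : (∫ t in Set.Ioi (0:ℝ), ((Real.exp (-t) * Real.log t : ℝ) : ℂ))
      = (-(Real.eulerMascheroniConstant : ℝ) : ℂ) := by
    rw [← h]
    refine setIntegral_congr_fun measurableSet_Ioi fun t ht => ?_
    rw [sub_self, Complex.cpow_zero, one_mul]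
    push_cast
    ring
  rw [show (∫ t in Set.Ioi (0:ℝ), ((Real.exp (-t) * Real.log t : ℝ) : ℂ))
      = ((∫ t in Set.Ioi (0:ℝ), Real.exp (-t) * Real.log t : ℝ) : ℂ) from integral_ofReal] at h2
  exact_mod_cast h2

lemma integrable_exp_neg_log :
    IntegrableOn (fun t : ℝ => Real.exp (-t) * Real.log t) (Set.Ioi 0) := by
  by_contra hI
  have := integral_exp_neg_mul_log
  rw [integral_undef hI] at this
  have hγ : (0:ℝ) < Real.eulerMascheroniConstant :=
    lt_trans (by norm_num) Real.one_half_lt_eulerMascheroniConstant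
  linarith

theorem laplace_transform_log {s : ℝ} (hs : 0 < s) :
    ∫ t in Set.Ioi (0:ℝ), Real.exp (-(s * t)) * Real.log t
      = -(Real.eulerMascheroniConstant + Real.log s) / s := by
  have hs' : s ≠ 0 := hs.ne'
  have hcomp : ∀ t : ℝ, Real.exp (-(s * t)) * Real.log t
      = (fun u => Real.exp (-u) * Real.log (u / s)) (s * t) := by
    intro t
    simp [mul_div_assoc, mul_div_cancel_left₀ _ hs']
  calc ∫ t in Set.Ioi (0:ℝ), Real.exp (-(s * t)) * Real.log t
      = ∫ t in Set.Ioi (0:ℝ), (fun u => Real.exp (-u) * Real.log (u / s)) (s * t) := by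
        simp_rw [← hcomp]
    _ = s⁻¹ • ∫ u in Set.Ioi (s * 0), Real.exp (-u) * Real.log (u / s) :=
        MeasureTheory.integral_comp_mul_left_Ioi (fun u => Real.exp (-u) * Real.log (u / s)) 0 hs
    _ = s⁻¹ * ∫ u in Set.Ioi (0:ℝ), (Real.exp (-u) * Real.log u - Real.log s * Real.exp (-u)) := by
        rw [mul_zero, smul_eq_mul]
        congr 1
        refine setIntegral_congr_fun measurableSet_Ioi fun u hu => ?_
        rw [Real.log_div (ne_of_gt hu) hs']
        ring
    _ = -(Real.eulerMascheroniConstant + Real.log s) / s := by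
        have hexp : IntegrableOn (fun u : ℝ => Real.exp (-u)) (Set.Ioi 0) := by
          simpa using exp_neg_integrableOn_Ioi 0 one_pos
        rw [integral_sub integrable_exp_neg_log (hexp.const_mul _),
          integral_exp_neg_mul_log, MeasureTheory.integral_const_mul,
          integral_exp_neg_Ioi_zero]
        field_simp
        ring
end

section
/- For ν > 0, the generalized modified exponential integral Ein_ν(t) := ∫₀^t (1 - E_ν(-u^ν))/u^ν du (for t > 0) has the series expansion Ein_ν(t) = ∑_{n=1}^∞ (-1)^{n-1} t^{νn - ν + 1} / ((νn - ν + 1) Γ(nν + 1)). -/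
open Real MeasureTheory Filter

/-- Log-convexity bound: for `0 < ν ≤ 1` and `x > 0`, `x * Γ(x) ≤ (x+ν)^(1-ν) * Γ(x+ν)`. -/
lemma gamma_step {ν : ℝ} (hν : 0 < ν) (hν1 : ν ≤ 1) {x : ℝ} (hx : 0 < x) :
    x * Real.Gamma x ≤ (x + ν) ^ (1 - ν) * Real.Gamma (x + ν) := by
  have hxν : 0 < x + ν := by linarith
  have hxν1 : 0 < x + ν + 1 := by linarith
  have h := Real.convexOn_log_Gamma.2 (Set.mem_Ioi.mpr hxν) (Set.mem_Ioi.mpr hxν1)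
    hν.le (by linarith : (0:ℝ) ≤ 1 - ν) (by ring)
  have harg : ν • (x + ν) + (1 - ν) • (x + ν + 1) = x + 1 := by
    simp only [smul_eq_mul]; ring
  rw [harg] at h
  simp only [Function.comp_apply, smul_eq_mul] at h
  have hΓν : 0 < Real.Gamma (x + ν) := Real.Gamma_pos_of_pos hxν
  have hΓ1 : Real.Gamma (x + ν + 1) = (x + ν) * Real.Gamma (x + ν) :=
    Real.Gamma_add_one hxν.ne'
  rw [hΓ1, Real.log_mul hxν.ne' hΓν.ne'] at h
  have h2 : Real.log (Real.Gamma (x + 1)) ≤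
      (1 - ν) * Real.log (x + ν) + Real.log (Real.Gamma (x + ν)) := by nlinarith
  have hgx1 : Real.Gamma (x + 1) = x * Real.Gamma x := Real.Gamma_add_one hx.ne'
  have hΓx1 : 0 < Real.Gamma (x + 1) := Real.Gamma_pos_of_pos (by linarith)
  have hexp := Real.exp_le_exp.mpr h2
  rw [Real.exp_log hΓx1, Real.exp_add, Real.exp_log hΓν] at hexp
  rw [← hgx1]
  calc Real.Gamma (x + 1) ≤ Real.exp ((1 - ν) * Real.log (x + ν)) * Real.Gamma (x + ν) := hexp
    _ = (x + ν) ^ (1 - ν) * Real.Gamma (x + ν) := by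
        rw [Real.rpow_def_of_pos hxν]; ring_nf

/-- Gamma growth: eventually `C * Γ(nν+1) ≤ Γ((n+1)ν+1)`. -/
lemma gamma_growth {ν : ℝ} (hν : 0 < ν) (C : ℝ) :
    ∀ᶠ n : ℕ in atTop, C * Real.Gamma (n * ν + 1) ≤ Real.Gamma ((n + 1) * ν + 1) := by
  have key : ∃ c : ℕ → ℝ, Tendsto c atTop atTop ∧
      ∀ n : ℕ, c n * Real.Gamma (n * ν + 1) ≤ Real.Gamma ((n + 1) * ν + 1) := by
    rcases le_or_gt ν 1 with hν1 | hν1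
    · refine ⟨fun n => (2:ℝ) ^ (ν - 1) * ((n:ℝ) * ν + 1) ^ ν, ?_, ?_⟩
      · apply Tendsto.const_mul_atTop (by positivity)
        apply (tendsto_rpow_atTop hν).comp
        apply tendsto_atTop_add_const_right
        exact Tendsto.atTop_mul_const hν tendsto_natCast_atTop_atTop
      · intro n
        have hx : (0:ℝ) < (n:ℝ) * ν + 1 := by positivity
        have hb := gamma_step hν hν1 hx
        have harg : (n:ℝ) * ν + 1 + ν = ((n:ℝ) + 1) * ν + 1 := by ring
        rw [harg] at hb
        have hΓb : 0 < Real.Gamma (((n:ℝ) + 1) * ν + 1) := Real.Gamma_pos_of_pos (by positivity)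
        have hΓa : 0 < Real.Gamma ((n:ℝ) * ν + 1) := Real.Gamma_pos_of_pos hx
        have hle : ((n:ℝ) + 1) * ν + 1 ≤ 2 * ((n:ℝ) * ν + 1) := by
          nlinarith [Nat.cast_nonneg (α := ℝ) n]
        have hmono : (((n:ℝ) + 1) * ν + 1) ^ (1 - ν) ≤ (2 * ((n:ℝ) * ν + 1)) ^ (1 - ν) :=
          Real.rpow_le_rpow (by positivity) hle (by linarith)
        rw [Real.mul_rpow (by norm_num) hx.le] at hmono
        set P : ℝ := (2:ℝ) ^ (1 - ν) * ((n:ℝ) * ν + 1) ^ (1 - ν) with hP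
        have hPpos : 0 < P := by positivity
        have hchain : ((n:ℝ) * ν + 1) * Real.Gamma ((n:ℝ) * ν + 1) ≤
            P * Real.Gamma (((n:ℝ) + 1) * ν + 1) :=
          hb.trans (mul_le_mul_of_nonneg_right hmono hΓb.le)
        have e1 : (2:ℝ) ^ (ν - 1) * 2 ^ (1 - ν) = 1 := by
          rw [← Real.rpow_add two_pos]; norm_num
        have e2 : ((n:ℝ) * ν + 1) ^ ν * ((n:ℝ) * ν + 1) ^ (1 - ν) = (n:ℝ) * ν + 1 := by
          rw [← Real.rpow_add hx]
          norm_num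
        refine le_of_mul_le_mul_right ?_ hPpos
        have hid : (2:ℝ) ^ (ν - 1) * ((n:ℝ) * ν + 1) ^ ν * Real.Gamma ((n:ℝ) * ν + 1) * P =
            ((n:ℝ) * ν + 1) * Real.Gamma ((n:ℝ) * ν + 1) := by
          calc (2:ℝ) ^ (ν - 1) * ((n:ℝ) * ν + 1) ^ ν * Real.Gamma ((n:ℝ) * ν + 1) * P
              = ((2:ℝ) ^ (ν - 1) * 2 ^ (1 - ν)) *
                (((n:ℝ) * ν + 1) ^ ν * ((n:ℝ) * ν + 1) ^ (1 - ν)) *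
                Real.Gamma ((n:ℝ) * ν + 1) := by rw [hP]; ring
            _ = _ := by rw [e1, e2]; ring
        rw [hid]
        exact hchain.trans_eq (mul_comm _ _)
    · refine ⟨fun n => (n : ℝ) * ν + 1, ?_, ?_⟩
      · apply tendsto_atTop_add_const_right
        exact Tendsto.atTop_mul_const hν tendsto_natCast_atTop_atTop
      · intro n
        have h1 : Real.Gamma ((n:ℝ) * ν + 1 + 1) = ((n:ℝ) * ν + 1) * Real.Gamma ((n:ℝ) * ν + 1) :=
          Real.Gamma_add_one (by positivity)
        have hmono : Real.Gamma ((n:ℝ) * ν + 1 + 1) ≤ Real.Gamma (((n:ℝ) + 1) * ν + 1) := by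
          rcases eq_or_lt_of_le (by nlinarith [Nat.cast_nonneg (α := ℝ) n] :
              (n:ℝ) * ν + 1 + 1 ≤ ((n:ℝ) + 1) * ν + 1) with h | h
          · rw [h]
          · have ha : ((n:ℝ) * ν + 1 + 1) ∈ Set.Ici (2:ℝ) := by
              simp only [Set.mem_Ici]
              nlinarith [mul_nonneg (Nat.cast_nonneg (α := ℝ) n) hν.le]
            have hb : (((n:ℝ) + 1) * ν + 1) ∈ Set.Ici (2:ℝ) := by
              simp only [Set.mem_Ici]
              nlinarith [mul_nonneg (Nat.cast_nonneg (α := ℝ) n) hν.le]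
            exact le_of_lt (Real.Gamma_strictMonoOn_Ici ha hb h)
        rw [h1] at hmono
        exact hmono
  obtain ⟨c, hc, hcle⟩ := key
  filter_upwards [hc.eventually_ge_atTop C] with n hn
  have hΓ : 0 ≤ Real.Gamma ((n:ℝ) * ν + 1) := (Real.Gamma_pos_of_pos (by positivity)).le
  calc C * Real.Gamma ((n:ℝ) * ν + 1) ≤ c n * Real.Gamma ((n:ℝ) * ν + 1) :=
        mul_le_mul_of_nonneg_right hn hΓ
    _ ≤ _ := hcle n

/-- Summability of the Mittag-Leffler series. -/
lemma summable_ml {ν : ℝ} (hν : 0 < ν) (y : ℝ) :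
    Summable (fun n : ℕ => y ^ n / Real.Gamma ((n:ℝ) * ν + 1)) := by
  apply summable_of_ratio_norm_eventually_le (r := 1/2) (by norm_num)
  filter_upwards [gamma_growth hν (2 * ‖y‖)] with n hn
  have hΓa : 0 < Real.Gamma ((n:ℝ) * ν + 1) := Real.Gamma_pos_of_pos (by positivity)
  have hΓb : 0 < Real.Gamma (((n:ℝ) + 1) * ν + 1) := Real.Gamma_pos_of_pos (by positivity)
  have hcast : ((n + 1 : ℕ) : ℝ) = (n:ℝ) + 1 := by push_cast; ring
  rw [norm_div, norm_div, norm_pow, norm_pow, hcast,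
    Real.norm_of_nonneg hΓa.le, Real.norm_of_nonneg hΓb.le]
  rw [div_le_iff₀ hΓb, pow_succ]
  have h1 : ‖y‖ * Real.Gamma ((n:ℝ) * ν + 1) ≤ Real.Gamma (((n:ℝ) + 1) * ν + 1) / 2 := by
    nlinarith [norm_nonneg y]
  calc ‖y‖ ^ n * ‖y‖
      = (‖y‖ ^ n / Real.Gamma ((n:ℝ) * ν + 1)) * (‖y‖ * Real.Gamma ((n:ℝ) * ν + 1)) := by
        field_simp
    _ ≤ (‖y‖ ^ n / Real.Gamma ((n:ℝ) * ν + 1)) * (Real.Gamma (((n:ℝ) + 1) * ν + 1) / 2) :=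
        mul_le_mul_of_nonneg_left h1 (by positivity)
    _ = 1 / 2 * (‖y‖ ^ n / Real.Gamma ((n:ℝ) * ν + 1)) * Real.Gamma (((n:ℝ) + 1) * ν + 1) := by
        ring

/-- The Mittag-Leffler function with parameter `ν`. -/
noncomputable def mittagLeffler (ν : ℝ) (x : ℝ) : ℝ :=
  ∑' k : ℕ, x ^ k / Real.Gamma (k * ν + 1)

/-- The generalized modified exponential integral. -/
noncomputable def EinNu (ν : ℝ) (t : ℝ) : ℝ :=
  ∫ u in (0:ℝ)..t, (1 - mittagLeffler ν (-(u ^ ν))) / u ^ ν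

lemma ml_pointwise {ν : ℝ} (hν : 0 < ν) {u : ℝ} (hu : 0 < u) :
    HasSum (fun n : ℕ => (-1:ℝ) ^ n * u ^ (ν * n) / Real.Gamma (((n:ℝ) + 1) * ν + 1))
      ((1 - mittagLeffler ν (-(u ^ ν))) / u ^ ν) := by
  set x : ℝ := -(u ^ ν) with hx
  have hsum : Summable (fun k : ℕ => x ^ k / Real.Gamma ((k:ℝ) * ν + 1)) := summable_ml hν x
  have hE : HasSum (fun k : ℕ => x ^ k / Real.Gamma ((k:ℝ) * ν + 1)) (mittagLeffler ν x) := by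
    rw [mittagLeffler]; exact hsum.hasSum
  have h1 : HasSum (fun n : ℕ => x ^ (n + 1) / Real.Gamma ((↑(n + 1):ℝ) * ν + 1))
      (mittagLeffler ν x - ∑ i ∈ Finset.range 1, x ^ i / Real.Gamma ((i:ℝ) * ν + 1)) :=
    (hasSum_nat_add_iff' 1).mpr hE
  have hr : ∑ i ∈ Finset.range 1, x ^ i / Real.Gamma ((i:ℝ) * ν + 1) = 1 := by
    simp [Real.Gamma_one]
  rw [hr] at h1
  have huv : (0:ℝ) < u ^ ν := Real.rpow_pos_of_pos hu ν
  have h2 := (h1.div_const (u ^ ν)).neg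
  have hfun : ∀ n : ℕ, (-1:ℝ) ^ n * u ^ (ν * n) / Real.Gamma (((n:ℝ) + 1) * ν + 1)
      = -(x ^ (n + 1) / Real.Gamma ((↑(n + 1):ℝ) * ν + 1) / u ^ ν) := by
    intro n
    have hxp : x ^ (n + 1) = (-1:ℝ) ^ (n + 1) * (u ^ ν) ^ (n + 1) := by
      rw [hx, neg_pow]
    have hup : (u ^ ν) ^ (n + 1) = u ^ (ν * ((n:ℝ) + 1)) := by
      rw [← Real.rpow_natCast (u ^ ν) (n + 1), ← Real.rpow_mul hu.le]
      push_cast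
      ring_nf
    have hdiv : u ^ (ν * ((n:ℝ) + 1)) / u ^ ν = u ^ (ν * n) := by
      rw [← Real.rpow_sub hu]
      ring_nf
    have hcast : ((↑(n + 1):ℝ)) * ν + 1 = ((n:ℝ) + 1) * ν + 1 := by push_cast; ring
    rw [hxp, hup, hcast, pow_succ]
    field_simp
    rw [← hdiv]
    field_simp
  have hval : (1 - mittagLeffler ν x) / u ^ ν = -((mittagLeffler ν x - 1) / u ^ ν) := by ring
  rw [show (fun n : ℕ => (-1:ℝ) ^ n * u ^ (ν * n) / Real.Gamma (((n:ℝ) + 1) * ν + 1))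
      = fun n : ℕ => -(x ^ (n + 1) / Real.Gamma ((↑(n + 1):ℝ) * ν + 1) / u ^ ν) from
    funext hfun, hval]
  exact h2

theorem einNu_series {ν : ℝ} (hν : 0 < ν) {t : ℝ} (ht : 0 < t) :
    HasSum
      (fun n : ℕ =>
        (-1) ^ n * t ^ (ν * (n + 1) - ν + 1)
          / ((ν * (n + 1) - ν + 1) * Real.Gamma ((n + 1) * ν + 1)))
      (EinNu ν t) := by
  have ht' := ht.le
  set F : ℕ → ℝ → ℝ := fun n u => (-1:ℝ) ^ n * u ^ (ν * n) / Real.Gamma (((n:ℝ) + 1) * ν + 1)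
    with hF
  have hΓpos : ∀ n : ℕ, 0 < Real.Gamma (((n:ℝ) + 1) * ν + 1) := fun n =>
    Real.Gamma_pos_of_pos (by positivity)
  have hrexp : ∀ n : ℕ, (-1:ℝ) < ν * n := fun n => by
    have : (0:ℝ) ≤ ν * n := by positivity
    linarith
  have hexp_pos : ∀ n : ℕ, (0:ℝ) < ν * n + 1 := fun n => by positivity
  have hii : ∀ n : ℕ, IntervalIntegrable (F n) volume 0 t := by
    intro n
    have h := intervalIntegral.intervalIntegrable_rpow' (a := 0) (b := t) (r := ν * n) (hrexp n)
    exact (h.const_mul ((-1:ℝ) ^ n)).div_const _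
  have hint : ∀ n : ℕ, IntegrableOn (F n) (Set.Ioc 0 t) volume := fun n =>
    (intervalIntegrable_iff_integrableOn_Ioc_of_le ht').mp (hii n)
  have hval : ∀ n : ℕ, ∫ u in (0:ℝ)..t, F n u
      = (-1:ℝ) ^ n * t ^ (ν * n + 1) / ((ν * n + 1) * Real.Gamma (((n:ℝ) + 1) * ν + 1)) := by
    intro n
    rw [hF]
    simp only
    rw [intervalIntegral.integral_div, intervalIntegral.integral_const_mul,
      integral_rpow (Or.inl (hrexp n)), Real.zero_rpow (hexp_pos n).ne', sub_zero]
    field_simp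
  have hnorm : ∀ n : ℕ, (∫ u in Set.Ioc (0:ℝ) t, ‖F n u‖)
      = t ^ (ν * n + 1) / ((ν * n + 1) * Real.Gamma (((n:ℝ) + 1) * ν + 1)) := by
    intro n
    have heq : Set.EqOn (fun u => ‖F n u‖)
        (fun u => u ^ (ν * n) / Real.Gamma (((n:ℝ) + 1) * ν + 1)) (Set.Ioc 0 t) := by
      intro u hu
      simp only [hF]
      rw [norm_div, norm_mul, norm_pow, norm_neg, norm_one, one_pow, one_mul,
        Real.norm_of_nonneg (Real.rpow_nonneg hu.1.le _), Real.norm_of_nonneg (hΓpos n).le]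
    rw [setIntegral_congr_fun measurableSet_Ioc heq, ← intervalIntegral.integral_of_le ht',
      intervalIntegral.integral_div, integral_rpow (Or.inl (hrexp n)),
      Real.zero_rpow (hexp_pos n).ne', sub_zero, div_div]
  have hsummable : Summable (fun n : ℕ => ∫ u in Set.Ioc (0:ℝ) t, ‖F n u‖) := by
    simp only [hnorm]
    have S : Summable (fun n : ℕ => (t ^ ν) ^ n / Real.Gamma ((n:ℝ) * ν + 1)) := summable_ml hν _
    have S1 : Summable (fun n : ℕ => (t ^ ν) ^ (n + 1) / Real.Gamma ((↑(n + 1):ℝ) * ν + 1)) :=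
      (summable_nat_add_iff 1).mpr S
    apply Summable.of_nonneg_of_le (fun n => by positivity) ?_ (S1.mul_left (t / t ^ ν))
    intro n
    have htν : 0 < t ^ ν := Real.rpow_pos_of_pos ht ν
    have e : (t / t ^ ν) * ((t ^ ν) ^ (n + 1) / Real.Gamma ((↑(n + 1):ℝ) * ν + 1))
        = t ^ (ν * n + 1) / Real.Gamma (((n:ℝ) + 1) * ν + 1) := by
      have h1 : (t ^ ν) ^ (n + 1) = t ^ (ν * n) * t ^ ν := by
        rw [← Real.rpow_natCast (t ^ ν) (n + 1), ← Real.rpow_mul ht', ← Real.rpow_add ht]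
        push_cast
        ring_nf
      have h2 : t ^ (ν * (n:ℝ) + 1) = t ^ (ν * n) * t := by
        rw [Real.rpow_add ht, Real.rpow_one]
      have hcast : ((↑(n + 1):ℝ)) * ν + 1 = ((n:ℝ) + 1) * ν + 1 := by push_cast; ring
      rw [h1, h2, hcast]
      field_simp
    rw [e]
    apply div_le_div_of_nonneg_left (by positivity) (by positivity)
    calc Real.Gamma (((n:ℝ) + 1) * ν + 1)
        = 1 * Real.Gamma (((n:ℝ) + 1) * ν + 1) := (one_mul _).symm
      _ ≤ (ν * n + 1) * Real.Gamma (((n:ℝ) + 1) * ν + 1) := by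
          apply mul_le_mul_of_nonneg_right _ (hΓpos n).le
          have : (0:ℝ) ≤ ν * n := by positivity
          linarith
  have hmain := MeasureTheory.hasSum_integral_of_summable_integral_norm
    (μ := volume.restrict (Set.Ioc (0:ℝ) t)) (F := F) hint hsummable
  have htsum : Set.EqOn (fun u => ∑' n, F n u)
      (fun u => (1 - mittagLeffler ν (-(u ^ ν))) / u ^ ν) (Set.Ioc 0 t) := fun u hu =>
    (ml_pointwise hν hu.1).tsum_eq
  rw [setIntegral_congr_fun measurableSet_Ioc htsum] at hmain
  have hE : EinNu ν t = ∫ u in Set.Ioc (0:ℝ) t, (1 - mittagLeffler ν (-(u ^ ν))) / u ^ ν := by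
    rw [EinNu, intervalIntegral.integral_of_le ht']
  rw [← hE] at hmain
  have hfin : (fun n : ℕ => (-1:ℝ) ^ n * t ^ (ν * (n + 1) - ν + 1)
      / ((ν * (n + 1) - ν + 1) * Real.Gamma (((n:ℝ) + 1) * ν + 1)))
      = fun n => ∫ u in Set.Ioc (0:ℝ) t, F n u := by
    funext n
    rw [← intervalIntegral.integral_of_le ht', hval n,
      show ν * ((n:ℝ) + 1) - ν + 1 = ν * n + 1 by ring]
  rw [hfin]
  exact hmain
end
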